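/- Let H be a real inner product space, let u : ℝ → ℝ be non-decreasing and L-Lipschitz with values in [0,1], let ψ : X → H satisfy ‖ψ(x)‖ ≤ 1 for all x, and let v, w ∈ H with ‖v - w‖ ≤ B. Let x₁, ..., xₘ ∈ X, y₁, ..., yₘ ∈ [0,1], and ξ : X → ℝ. Define Δ = (1/m) ∑ᵢ (yᵢ - u(⟨v, ψ(xᵢ)⟩ + ξ(xᵢ))) ψ(xᵢ), Δ' = (1/m) ∑ᵢ (yᵢ - u(⟨w, ψ(xᵢ)⟩)) ψ(xᵢ), ε̂ = (1/m) ∑ᵢ (u(⟨v, ψ(xᵢ)⟩ + ξ(xᵢ)) - u(⟨w, ψ(xᵢ)⟩))², and ρ = (1/m) ∑ᵢ ξ(xᵢ)². If ‖Δ‖ ≤ η for some η < 1, then for any λ > 0, ‖w - v‖² - ‖(w + λΔ') - v‖² ≥ λ·((2/L - λ)·ε̂ - 2√ρ - 2Bη - λη² - 2λη). -/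
import Mathlib

open Finset in
lemma avg_abs_le_sqrt_avg_sq {m : ℕ} (hm : 0 < m) (c : Fin m → ℝ) :
    (1 / (m : ℝ)) * ∑ i, |c i| ≤ Real.sqrt ((1 / (m : ℝ)) * ∑ i, (c i) ^ 2) := by
  have hm' : (0 : ℝ) < m := Nat.cast_pos.mpr hm
  have h1 : (0 : ℝ) ≤ (1 / (m : ℝ)) * ∑ i, |c i| := by
    apply mul_nonneg (by positivity)
    exact Finset.sum_nonneg fun i _ => abs_nonneg _
  have h2 : (0 : ℝ) ≤ (1 / (m : ℝ)) * ∑ i, (c i) ^ 2 := by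
    apply mul_nonneg (by positivity)
    exact Finset.sum_nonneg fun i _ => sq_nonneg _
  rw [Real.le_sqrt h1 h2]
  have hcs : (∑ i, |c i|) ^ 2 ≤ (m : ℝ) * ∑ i, |c i| ^ 2 := by
    simpa using sq_sum_le_card_mul_sum_sq (s := Finset.univ) (f := fun i => |c i|)
  have hsq : ∀ i : Fin m, |c i| ^ 2 = (c i) ^ 2 := fun i => sq_abs _
  rw [Finset.sum_congr rfl fun i _ => hsq i] at hcs
  have : ((1 / (m : ℝ)) * ∑ i, |c i|) ^ 2 = (1 / (m:ℝ))^2 * (∑ i, |c i|)^2 := by ring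
  rw [this]
  calc (1 / (m:ℝ))^2 * (∑ i, |c i|)^2 ≤ (1 / (m:ℝ))^2 * ((m:ℝ) * ∑ i, (c i)^2) := by
        apply mul_le_mul_of_nonneg_left hcs (by positivity)
    _ = (1 / (m : ℝ)) * ∑ i, (c i) ^ 2 := by field_simp

set_option maxHeartbeats 2000000 in
open RealInnerProductSpace in
theorem stmt_12 {X : Type*} {H : Type*} [NormedAddCommGroup H] [InnerProductSpace ℝ H]
    (u : ℝ → ℝ) (L : ℝ) (hL : 0 < L) (hmono : Monotone u)
    (hlip : ∀ a b : ℝ, |u a - u b| ≤ L * |a - b|)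
    (hu01 : ∀ a, u a ∈ Set.Icc (0 : ℝ) 1)
    (ψ : X → H) (hψ : ∀ x, ‖ψ x‖ ≤ 1)
    (v w : H) (B : ℝ) (hB : ‖v - w‖ ≤ B)
    (m : ℕ) (hm : 0 < m) (x : Fin m → X) (y : Fin m → ℝ)
    (hy : ∀ i, y i ∈ Set.Icc (0 : ℝ) 1) (ξ : X → ℝ)
    (η : ℝ) (hη : η < 1)
    (hΔ : ‖(1 / (m : ℝ)) • ∑ i, (y i - u (⟪v, ψ (x i)⟫ + ξ (x i))) • ψ (x i)‖ ≤ η)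
    (lam : ℝ) (hlam : 0 < lam) :
    ‖w - v‖ ^ 2 -
        ‖(w + lam • ((1 / (m : ℝ)) • ∑ i, (y i - u ⟪w, ψ (x i)⟫) • ψ (x i))) - v‖ ^ 2
      ≥ lam * ((2 / L - lam) *
            ((1 / (m : ℝ)) * ∑ i, (u (⟪v, ψ (x i)⟫ + ξ (x i)) - u ⟪w, ψ (x i)⟫) ^ 2)
          - 2 * Real.sqrt ((1 / (m : ℝ)) * ∑ i, ξ (x i) ^ 2)
          - 2 * B * η - lam * η ^ 2 - 2 * lam * η) := by
  have hm' : (0 : ℝ) < m := Nat.cast_pos.mpr hm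
  set a : Fin m → ℝ := fun i => ⟪v, ψ (x i)⟫ + ξ (x i) with ha
  set b : Fin m → ℝ := fun i => ⟪w, ψ (x i)⟫ with hb
  set Δ : H := (1 / (m : ℝ)) • ∑ i, (y i - u (a i)) • ψ (x i) with hΔdef
  set Δ' : H := (1 / (m : ℝ)) • ∑ i, (y i - u (b i)) • ψ (x i) with hΔ'def
  set D : H := (1 / (m : ℝ)) • ∑ i, (u (a i) - u (b i)) • ψ (x i) with hDdef
  set E : ℝ := (1 / (m : ℝ)) * ∑ i, (u (a i) - u (b i)) ^ 2 with hE
  set R : ℝ := Real.sqrt ((1 / (m : ℝ)) * ∑ i, ξ (x i) ^ 2) with hR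
  -- inner product of z with such averages
  have hinner : ∀ (z : H) (c : Fin m → ℝ),
      ⟪z, (1 / (m : ℝ)) • ∑ i, c i • ψ (x i)⟫ = (1 / (m : ℝ)) * ∑ i, c i * ⟪z, ψ (x i)⟫ := by
    intro z c
    rw [real_inner_smul_right, inner_sum]
    congr 1
    exact Finset.sum_congr rfl fun i _ => real_inner_smul_right z (ψ (x i)) (c i)
  have hη0 : 0 ≤ η := le_trans (norm_nonneg _) hΔ
  -- E nonneg and ≤ 1
  have hE0 : 0 ≤ E := mul_nonneg (by positivity) (Finset.sum_nonneg fun i _ => sq_nonneg _)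
  have hE1 : E ≤ 1 := by
    have : ∑ i, (u (a i) - u (b i)) ^ 2 ≤ ∑ i : Fin m, (1 : ℝ) := by
      apply Finset.sum_le_sum
      intro i _
      have h1 := hu01 (a i); have h2 := hu01 (b i)
      simp only [Set.mem_Icc] at h1 h2
      nlinarith [h1.1, h1.2, h2.1, h2.2]
    rw [hE]
    calc (1 / (m : ℝ)) * ∑ i, (u (a i) - u (b i)) ^ 2
        ≤ (1 / (m : ℝ)) * ∑ i : Fin m, (1 : ℝ) :=
          mul_le_mul_of_nonneg_left this (by positivity)
      _ = 1 := by simp; field_simp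
  -- split Δ' = Δ + D
  have hsplit : Δ' = Δ + D := by
    rw [hΔdef, hΔ'def, hDdef, ← smul_add, ← Finset.sum_add_distrib]
    congr 1
    apply Finset.sum_congr rfl
    intro i _
    rw [← add_smul]
    congr 1
    ring
  -- ‖D‖ ≤ √E
  have hDnorm : ‖D‖ ≤ Real.sqrt E := by
    have h1 : ‖D‖ ≤ (1 / (m : ℝ)) * ∑ i, |u (a i) - u (b i)| := by
      rw [hDdef, norm_smul]
      have : ‖∑ i, (u (a i) - u (b i)) • ψ (x i)‖ ≤ ∑ i, |u (a i) - u (b i)| := by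
        refine le_trans (norm_sum_le _ _) (Finset.sum_le_sum fun i _ => ?_)
        rw [norm_smul, Real.norm_eq_abs]
        calc |u (a i) - u (b i)| * ‖ψ (x i)‖ ≤ |u (a i) - u (b i)| * 1 :=
              mul_le_mul_of_nonneg_left (hψ (x i)) (abs_nonneg _)
          _ = |u (a i) - u (b i)| := mul_one _
      calc ‖(1 / (m : ℝ))‖ * ‖∑ i, (u (a i) - u (b i)) • ψ (x i)‖
          = (1 / (m : ℝ)) * ‖∑ i, (u (a i) - u (b i)) • ψ (x i)‖ := by
            rw [Real.norm_eq_abs, abs_of_pos (by positivity)]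
        _ ≤ (1 / (m : ℝ)) * ∑ i, |u (a i) - u (b i)| :=
            mul_le_mul_of_nonneg_left this (by positivity)
    refine le_trans h1 ?_
    have := avg_abs_le_sqrt_avg_sq hm (fun i => u (a i) - u (b i))
    simpa [hE] using this
  have hsqrtE1 : Real.sqrt E ≤ 1 := by
    rw [show (1:ℝ) = Real.sqrt 1 by simp]
    exact Real.sqrt_le_sqrt hE1
  -- ‖Δ'‖² ≤ η² + E + 2η
  have hΔ'sq : ‖Δ'‖ ^ 2 ≤ η ^ 2 + E + 2 * η := by
    have ht : ‖Δ'‖ ≤ η + Real.sqrt E := by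
      rw [hsplit]
      exact le_trans (norm_add_le _ _) (add_le_add hΔ hDnorm)
    have hs : Real.sqrt E ^ 2 = E := Real.sq_sqrt hE0
    have hs0 : 0 ≤ Real.sqrt E := Real.sqrt_nonneg _
    nlinarith [norm_nonneg Δ']
  -- decomposition of inner product
  have hdecomp : ⟪v - w, Δ'⟫ = ⟪v - w, Δ⟫
      + (1 / (m : ℝ)) * ∑ i, (u (b i) - u (a i)) * ξ (x i)
      + (1 / (m : ℝ)) * ∑ i, (u (a i) - u (b i)) * (a i - b i) := by
    rw [hΔ'def, hΔdef, hinner, hinner]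
    rw [← mul_add, ← mul_add, ← Finset.sum_add_distrib, ← Finset.sum_add_distrib]
    congr 1
    apply Finset.sum_congr rfl
    intro i _
    have hsub : ⟪v - w, ψ (x i)⟫ = ⟪v, ψ (x i)⟫ - ⟪w, ψ (x i)⟫ := inner_sub_left _ _ _
    have hav : a i = ⟪v, ψ (x i)⟫ + ξ (x i) := rfl
    have hbv : b i = ⟪w, ψ (x i)⟫ := rfl
    rw [hsub]
    rw [hav, hbv]
    ring
  -- bound on ⟪v-w, Δ⟫
  have hB0 : 0 ≤ B := le_trans (norm_nonneg _) hB
  have hΔbd : ⟪v - w, Δ⟫ ≥ -(B * η) := by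
    have h1 : |⟪v - w, Δ⟫| ≤ ‖v - w‖ * ‖Δ‖ := abs_real_inner_le_norm _ _
    have h2 : ‖v - w‖ * ‖Δ‖ ≤ B * η :=
      mul_le_mul hB hΔ (norm_nonneg _) hB0
    have := neg_abs_le ⟪v - w, Δ⟫
    linarith
  -- bound on second term
  have hT2 : (1 / (m : ℝ)) * ∑ i, (u (b i) - u (a i)) * ξ (x i) ≥ -R := by
    have h1 : ∑ i, (u (b i) - u (a i)) * ξ (x i) ≥ ∑ i, -|ξ (x i)| := by
      apply Finset.sum_le_sum
      intro i _
      have h1 := hu01 (a i); have h2 := hu01 (b i)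
      simp only [Set.mem_Icc] at h1 h2
      have habs : |u (b i) - u (a i)| ≤ 1 := by
        rw [abs_le]; constructor <;> linarith [h1.1, h1.2, h2.1, h2.2]
      have := abs_mul (u (b i) - u (a i)) (ξ (x i))
      have h3 : |(u (b i) - u (a i)) * ξ (x i)| ≤ |ξ (x i)| := by
        rw [abs_mul]
        calc |u (b i) - u (a i)| * |ξ (x i)| ≤ 1 * |ξ (x i)| :=
              mul_le_mul_of_nonneg_right habs (abs_nonneg _)
          _ = |ξ (x i)| := one_mul _
      linarith [neg_abs_le ((u (b i) - u (a i)) * ξ (x i))]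
    have h2 : (1 / (m : ℝ)) * ∑ i, (u (b i) - u (a i)) * ξ (x i)
        ≥ (1 / (m : ℝ)) * ∑ i, -|ξ (x i)| := mul_le_mul_of_nonneg_left h1 (by positivity)
    have h3 : (1 / (m : ℝ)) * ∑ i, -|ξ (x i)| = -((1 / (m : ℝ)) * ∑ i, |ξ (x i)|) := by
      rw [Finset.sum_neg_distrib]; ring
    have h4 := avg_abs_le_sqrt_avg_sq hm (fun i => ξ (x i))
    rw [hR]
    linarith
  -- bound on third term
  have hT3 : (1 / (m : ℝ)) * ∑ i, (u (a i) - u (b i)) * (a i - b i) ≥ E / L := by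
    have hkey : ∀ s t : ℝ, (u s - u t) ^ 2 ≤ L * ((u s - u t) * (s - t)) := by
      intro s t
      rcases le_total s t with h | h
      · have h1 : u s ≤ u t := hmono h
        have h2 : |u s - u t| ≤ L * |s - t| := hlip s t
        rw [abs_of_nonpos (by linarith), abs_of_nonpos (by linarith)] at h2
        nlinarith
      · have h1 : u t ≤ u s := hmono h
        have h2 : |u s - u t| ≤ L * |s - t| := hlip s t
        rw [abs_of_nonneg (by linarith), abs_of_nonneg (by linarith)] at h2
        nlinarith
    have h1 : ∑ i, (u (a i) - u (b i)) ^ 2 ≤ L * ∑ i, (u (a i) - u (b i)) * (a i - b i) := by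
      rw [Finset.mul_sum]
      exact Finset.sum_le_sum fun i _ => hkey (a i) (b i)
    rw [ge_iff_le, div_le_iff₀ hL, hE]
    calc (1 / (m : ℝ)) * ∑ i, (u (a i) - u (b i)) ^ 2
        ≤ (1 / (m : ℝ)) * (L * ∑ i, (u (a i) - u (b i)) * (a i - b i)) :=
          mul_le_mul_of_nonneg_left h1 (by positivity)
      _ = (1 / (m : ℝ) * ∑ i, (u (a i) - u (b i)) * (a i - b i)) * L := by ring
  -- combine inner bound
  have hinnerbd : ⟪v - w, Δ'⟫ ≥ E / L - R - B * η := by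
    rw [hdecomp]; linarith
  -- norm expansion
  have hexpand : ‖w - v‖ ^ 2 - ‖(w + lam • Δ') - v‖ ^ 2
      = 2 * lam * ⟪v - w, Δ'⟫ - lam ^ 2 * ‖Δ'‖ ^ 2 := by
    have h1 : (w + lam • Δ') - v = (w - v) + lam • Δ' := by abel
    rw [h1, norm_add_sq_real, real_inner_smul_right, norm_smul, Real.norm_eq_abs,
      mul_pow, sq_abs]
    have h2 : ⟪w - v, Δ'⟫ = -⟪v - w, Δ'⟫ := by
      rw [show w - v = -(v - w) by abel, inner_neg_left]
    rw [h2]; ring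
  rw [hexpand]
  have H1 : 2 * lam * ⟪v - w, Δ'⟫ ≥ 2 * lam * (E / L - R - B * η) :=
    mul_le_mul_of_nonneg_left hinnerbd (by linarith)
  have H2 : lam ^ 2 * ‖Δ'‖ ^ 2 ≤ lam ^ 2 * (η ^ 2 + E + 2 * η) :=
    mul_le_mul_of_nonneg_left hΔ'sq (sq_nonneg _)
  have hEL : 2 * lam * (E / L) = lam * (2 / L) * E := by
    ring
  nlinarith [H1, H2]
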